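/- Let l ≥ 1 be an integer and consider the transmission multi-rate sampled-data (TMS) system Φ̃_s = Φ_s^l, Ψ̃_s = (Σ_{c=0}^{l−1} Φ_s^c)·(Δ ⊗ 𝓑(h)). Assume: (1) for every complex eigenvalue θ of Φ_s, Σ_{c=0}^{l−1} θ^c ≠ 0; (2) every nonzero complex row vector η ∈ ℂ^{1×Nn} that is a left eigenvector of Φ_s^l (i.e. η·Φ_s^l = μ·η for some μ ∈ ℂ) satisfies η·(Δ ⊗ 𝓑(h)) ≠ 0. Then the pair (Φ̃_s, Ψ̃_s) is controllable. -/

import Mathlib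

open Matrix
open scoped Kronecker

/-- Entrywise complexification of a real matrix. -/
noncomputable def cpx {a b : Type*} (M : Matrix a b ℝ) : Matrix a b ℂ :=
  M.map (Complex.ofReal)

/-- The matrix exponential `e^{M}`. -/
noncomputable def mexp {q : Type*} [Fintype q] [DecidableEq q]
    (M : Matrix q q ℝ) : Matrix q q ℝ :=
  NormedSpace.exp M

/-- The entrywise integral `∫₀ʰ e^{Aτ} dτ`. -/
noncomputable def intExp {q : Type*} [Fintype q] [DecidableEq q]
    (A : Matrix q q ℝ) (h : ℝ) : Matrix q q ℝ :=
  Matrix.of fun i j => ∫ τ in (0:ℝ)..h, (NormedSpace.exp (τ • A)) i j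

/-- `θ` is an eigenvalue of the complex square matrix `M`. -/
def IsEig {q : Type*} [Fintype q] [DecidableEq q] (M : Matrix q q ℂ) (θ : ℂ) : Prop :=
  (θ • (1 : Matrix q q ℂ) - M).det = 0

/-- PBH condition for a pair of complex matrices: for every `s ∈ ℂ`, the only row
vector `v` with `v (sI - M) = 0` and `v G = 0` is `v = 0`. -/
def PBH {q r : Type*} [Fintype q] [DecidableEq q] [Fintype r]
    (M : Matrix q q ℂ) (G : Matrix q r ℂ) : Prop :=
  ∀ (s : ℂ) (v : q → ℂ), v ᵥ* (s • (1 : Matrix q q ℂ) - M) = 0 → v ᵥ* G = 0 → v = 0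

/-- Controllability of a discrete-time linear system `x⁺ = F x + G u`:
every state can be steered to the origin in finitely many steps. -/
def Controllable {q r : Type*} [Fintype q] [DecidableEq q] [Fintype r]
    (F : Matrix q q ℝ) (G : Matrix q r ℝ) : Prop :=
  ∀ x : q → ℝ, ∃ (k : ℕ) (u : Fin k → r → ℝ),
    (F ^ k) *ᵥ x + ∑ j : Fin k, (F ^ (k - 1 - (j : ℕ))) *ᵥ (G *ᵥ u j) = 0

/-- `𝓑(h) = (∫₀ʰ e^{Aτ} dτ)·B`. -/
noncomputable def sampB {n p : ℕ} (A : Matrix (Fin n) (Fin n) ℝ)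
    (B : Matrix (Fin n) (Fin p) ℝ) (h : ℝ) : Matrix (Fin n) (Fin p) ℝ :=
  intExp A h * B

/-- `𝓗(h) = (∫₀ʰ e^{Aτ} dτ)·H·C`. -/
noncomputable def sampH {n m : ℕ} (A : Matrix (Fin n) (Fin n) ℝ)
    (H : Matrix (Fin n) (Fin m) ℝ) (C : Matrix (Fin m) (Fin n) ℝ) (h : ℝ) :
    Matrix (Fin n) (Fin n) ℝ :=
  intExp A h * H * C

/-- `Φ_s = I_N ⊗ e^{Ah} + W ⊗ 𝓗(h)`. -/
noncomputable def Phis {n m N : ℕ} (A : Matrix (Fin n) (Fin n) ℝ)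
    (H : Matrix (Fin n) (Fin m) ℝ) (C : Matrix (Fin m) (Fin n) ℝ)
    (W : Matrix (Fin N) (Fin N) ℝ) (h : ℝ) :
    Matrix (Fin N × Fin n) (Fin N × Fin n) ℝ :=
  (1 : Matrix (Fin N) (Fin N) ℝ) ⊗ₖ mexp (h • A) + W ⊗ₖ sampH A H C h

/-- `E_λ = e^{Ah} + λ·𝓗(h)` (complexified). -/
noncomputable def Emat {n m : ℕ} (A : Matrix (Fin n) (Fin n) ℝ)
    (H : Matrix (Fin n) (Fin m) ℝ) (C : Matrix (Fin m) (Fin n) ℝ)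
    (h : ℝ) (lam : ℂ) : Matrix (Fin n) (Fin n) ℂ :=
  cpx (mexp (h • A)) + lam • cpx (sampH A H C h)

/-! The Popov–Belevitch–Hautus test: a real pair `(F, G)` is controllable as soon as no complex
left eigenvector of `F` is annihilated by `G`. Indeed, the common left annihilator of all
`F ^ j * G` is `F`-invariant, so if it is nonzero it contains a left eigenvector of `F`; and by
Cayley–Hamilton it suffices to annihilate `F ^ j * G` for `j < dim`, which makes the
`dim`-step reachability map surjective.

For the multi-rate pair, `S = ∑_{c<l} Φ_s ^ c` has eigenvalues `∑_{c<l} θ ^ c` (spectral mapping),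
so it is invertible by (1), and it commutes with `Φ_s ^ l`. Hence `η ↦ η S` sends a left
eigenvector `η` of `Φ_s ^ l` with `η S (Δ ⊗ 𝓑(h)) = 0` to a nonzero left eigenvector of
`Φ_s ^ l` annihilated by `Δ ⊗ 𝓑(h)`, which (2) excludes. -/

open Polynomial

section Complexification

variable {q r : Type*}

lemma cpx_sum {a ι : Type*} (s : Finset ι) (f : ι → Matrix a q ℝ) :
    cpx (∑ i ∈ s, f i) = ∑ i ∈ s, cpx (f i) :=
  map_sum (Complex.ofRealHom.toAddMonoidHom.mapMatrix) f s

variable [Fintype q]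

lemma cpx_mul {a : Type*} (M : Matrix a q ℝ) (P : Matrix q r ℝ) :
    cpx (M * P) = cpx M * cpx P :=
  Matrix.map_mul (f := Complex.ofRealHom)

lemma cpx_pow [DecidableEq q] (M : Matrix q q ℝ) (k : ℕ) : cpx (M ^ k) = cpx M ^ k :=
  map_pow Complex.ofRealHom.mapMatrix M k

lemma cpx_vecMul (v : q → ℝ) (M : Matrix q r ℝ) :
    (fun i => (v i : ℂ)) ᵥ* cpx M = fun j => ((v ᵥ* M) j : ℂ) :=
  funext fun j => (RingHom.map_vecMul Complex.ofRealHom M v j).symm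

end Complexification

section LinearAlgebra

variable {K q r : Type*} [Field K] [Fintype q]

theorem mulVec_surjective_of_forall_vecMul_eq_zero {s : Type*} [Fintype s] (M : Matrix q s K)
    (h : ∀ η, η ᵥ* M = 0 → η = 0) : Function.Surjective M.mulVec := by
  have hinj : Function.Injective Mᵀ.mulVecLin := by
    rw [← LinearMap.ker_eq_bot, Matrix.ker_mulVecLin_eq_bot_iff]
    simpa only [Matrix.mulVec_transpose] using h
  rw [← Matrix.coe_mulVecLin, ← LinearMap.range_eq_top]
  refine Submodule.eq_top_of_finrank_eq ?_
  rw [← Matrix.rank, ← Matrix.rank_transpose, Matrix.rank, LinearMap.finrank_range_of_inj hinj]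

variable [DecidableEq q]

/-- Cayley–Hamilton: `F ^ j` is a combination of the powers `F ^ i` with `i < card q`. -/
theorem vecMul_pow_mul_eq_zero_of_forall_lt_card (F : Matrix q q K) (G : Matrix q r K)
    (η : q → K) (h : ∀ i < Fintype.card q, η ᵥ* (F ^ i * G) = 0) (j : ℕ) :
    η ᵥ* (F ^ j * G) = 0 := by
  rw [F.pow_eq_aeval_mod_charpoly, aeval_eq_sum_range, Matrix.sum_mul, Matrix.vecMul_sum]
  refine Finset.sum_eq_zero fun i _ => ?_
  by_cases hi : (X ^ j %ₘ F.charpoly).coeff i = 0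
  · simp [hi]
  have hlt : (i : WithBot ℕ) < Fintype.card q :=
    (le_degree_of_ne_zero hi).trans_lt
      (F.charpoly_degree_eq_dim ▸ degree_modByMonic_lt _ F.charpoly_monic)
  rw [Matrix.smul_mul, Matrix.vecMul_smul, h i (mod_cast hlt), smul_zero]

theorem exists_left_eigenvector_of_forall_vecMul_pow_mul_eq_zero [IsAlgClosed K]
    (F : Matrix q q K) (G : Matrix q r K) {η : q → K} (hη : η ≠ 0)
    (h : ∀ j, η ᵥ* (F ^ j * G) = 0) :
    ∃ w ≠ 0, (∃ μ : K, w ᵥ* F = μ • w) ∧ w ᵥ* G = 0 := by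
  let V : Submodule K (q → K) := ⨅ j : ℕ, LinearMap.ker (F ^ j * G).vecMulLinear
  have mem_V : ∀ w, w ∈ V ↔ ∀ j : ℕ, w ᵥ* (F ^ j * G) = 0 := by
    simp [V, Submodule.mem_iInf]
  have hV : ∀ w ∈ V, F.vecMulLinear w ∈ V := by
    intro w hw
    rw [mem_V] at hw ⊢
    intro j
    rw [Matrix.vecMulLinear_apply, Matrix.vecMul_vecMul, ← Matrix.mul_assoc, ← pow_succ']
    exact hw (j + 1)
  have : Nontrivial V := Submodule.nontrivial_iff_ne_bot.mpr
    ((Submodule.ne_bot_iff V).mpr ⟨η, (mem_V η).mpr h, hη⟩)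
  obtain ⟨μ, hμ⟩ := Module.End.exists_eigenvalue (F.vecMulLinear.restrict hV)
  obtain ⟨w, hw⟩ := hμ.exists_hasEigenvector
  refine ⟨w, fun hw0 => hw.2 (Subtype.ext hw0), ⟨μ, congrArg Subtype.val hw.apply_eq_smul⟩, ?_⟩
  simpa using (mem_V w).mp w.2 0

end LinearAlgebra

section Controllability

variable {R q r : Type*} [Fintype q] [DecidableEq q]

/-- Column `(j, s)` is the `s`-th column of `F ^ (k - 1 - j) * G`, so that `k` steps of
`x⁺ = F x + G u` starting from `0` reach exactly the range of this matrix. -/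
def reachabilityMatrix [Semiring R] (F : Matrix q q R) (G : Matrix q r R) (k : ℕ) :
    Matrix q (Fin k × r) R :=
  Matrix.of fun a js => (F ^ (k - 1 - (js.1 : ℕ)) * G) a js.2

lemma reachabilityMatrix_mulVec [CommSemiring R] [Fintype r] (F : Matrix q q R)
    (G : Matrix q r R) (k : ℕ) (w : Fin k × r → R) :
    reachabilityMatrix F G k *ᵥ w =
      ∑ j : Fin k, F ^ (k - 1 - (j : ℕ)) *ᵥ (G *ᵥ fun s => w (j, s)) := by
  ext a
  simp [reachabilityMatrix, Matrix.mulVec_mulVec, Matrix.mulVec, dotProduct,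
    Fintype.sum_prod_type, Finset.sum_apply]

lemma vecMul_reachabilityMatrix_apply [Semiring R] (F : Matrix q q R) (G : Matrix q r R) (k : ℕ)
    (η : q → R) (j : Fin k) (s : r) :
    (η ᵥ* reachabilityMatrix F G k) (j, s) = (η ᵥ* (F ^ (k - 1 - (j : ℕ)) * G)) s :=
  rfl

theorem controllable_of_forall_vecMul_pow_mul_eq_zero [Fintype r]
    (F : Matrix q q ℝ) (G : Matrix q r ℝ)
    (h : ∀ η : q → ℝ, (∀ i < Fintype.card q, η ᵥ* (F ^ i * G) = 0) → η = 0) :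
    Controllable F G := by
  set d := Fintype.card q
  have hsurj : Function.Surjective (reachabilityMatrix F G d).mulVec := by
    refine mulVec_surjective_of_forall_vecMul_eq_zero _ fun η hη => h η fun i hi => ?_
    ext s
    have hcol := congrFun hη (⟨d - 1 - i, by omega⟩, s)
    rwa [vecMul_reachabilityMatrix_apply, show d - 1 - (d - 1 - i) = i by omega] at hcol
  intro x
  obtain ⟨w, hw⟩ := hsurj (-(F ^ d *ᵥ x))
  exact ⟨d, fun j s => w (j, s), by rw [← reachabilityMatrix_mulVec, hw, add_neg_cancel]⟩

theorem controllable_of_forall_left_eigenvector [Fintype r]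
    (F : Matrix q q ℝ) (G : Matrix q r ℝ)
    (h : ∀ η : q → ℂ, η ≠ 0 → (∃ μ : ℂ, η ᵥ* cpx F = μ • η) → η ᵥ* cpx G ≠ 0) :
    Controllable F G := by
  refine controllable_of_forall_vecMul_pow_mul_eq_zero F G fun η hη => ?_
  by_contra hη0
  set ηc : q → ℂ := fun i => (η i : ℂ)
  have hηc : ηc ≠ 0 := fun h0 =>
    hη0 (funext fun i => Complex.ofReal_eq_zero.mp (congrFun h0 i))
  have hηcG : ∀ j, ηc ᵥ* (cpx F ^ j * cpx G) = 0 := fun j => by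
    rw [← cpx_pow, ← cpx_mul, cpx_vecMul,
      vecMul_pow_mul_eq_zero_of_forall_lt_card F G η hη j]
    rfl
  obtain ⟨w, hw, hwF, hwG⟩ :=
    exists_left_eigenvector_of_forall_vecMul_pow_mul_eq_zero _ _ hηc hηcG
  exact h w hw hwF hwG

end Controllability

lemma isEig_iff_mem_spectrum {q : Type*} [Fintype q] [DecidableEq q] (M : Matrix q q ℂ)
    (θ : ℂ) :
    IsEig M θ ↔ θ ∈ spectrum ℂ M := by
  rw [Matrix.mem_spectrum_iff_isRoot_charpoly, IsRoot, Matrix.eval_charpoly, IsEig,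
    Matrix.smul_one_eq_diagonal, Matrix.scalar_apply]

theorem isUnit_aeval_of_forall_isEig {q : Type*} [Fintype q] [DecidableEq q] (M : Matrix q q ℂ)
    (p : ℂ[X]) (hp : ∀ θ, IsEig M θ → p.eval θ ≠ 0) : IsUnit (aeval M p) := by
  rcases isEmpty_or_nonempty q
  · exact isUnit_of_subsingleton _
  rw [← spectrum.zero_notMem_iff ℂ, spectrum.map_polynomial_aeval_of_nonempty _ _
    (spectrum.nonempty_of_isAlgClosed_of_finiteDimensional ℂ M)]
  rintro ⟨θ, hθ, h0⟩
  exact hp θ ((isEig_iff_mem_spectrum M θ).mpr hθ) h0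

theorem stmt18_general
    (n m p N : ℕ)
    (h : ℝ)
    (A : Matrix (Fin n) (Fin n) ℝ) (B : Matrix (Fin n) (Fin p) ℝ)
    (C : Matrix (Fin m) (Fin n) ℝ) (H : Matrix (Fin n) (Fin m) ℝ)
    (W : Matrix (Fin N) (Fin N) ℝ)
    (δ : Fin N → ℝ)
    (l : ℕ)
    (h1 : ∀ θ : ℂ, IsEig (cpx (Phis A H C W h)) θ → ∑ c ∈ Finset.range l, θ ^ c ≠ 0)
    (h2 : ∀ η : Fin N × Fin n → ℂ, η ≠ 0 →
      (∃ μ : ℂ, η ᵥ* (cpx (Phis A H C W h) ^ l) = μ • η) →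
      η ᵥ* cpx (Matrix.diagonal δ ⊗ₖ sampB A B h) ≠ 0) :
    Controllable (Phis A H C W h ^ l)
      ((∑ c ∈ Finset.range l, Phis A H C W h ^ c) *
        (Matrix.diagonal δ ⊗ₖ sampB A B h)) := by
  set Φ := Phis A H C W h
  set Ψ := Matrix.diagonal δ ⊗ₖ sampB A B h
  set S := aeval (cpx Φ) (∑ c ∈ Finset.range l, X ^ c : ℂ[X])
  have hS : cpx ((∑ c ∈ Finset.range l, Φ ^ c) * Ψ) = S * cpx Ψ := by
    simp [S, cpx_mul, cpx_pow, cpx_sum]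
  have hSunit : IsUnit S :=
    isUnit_aeval_of_forall_isEig _ _ fun θ hθ => by simpa [eval_finsetSum] using h1 θ hθ
  have hSΦ : Commute S (cpx Φ ^ l) := by
    simpa only [aeval_X_pow] using
      (Commute.all (∑ c ∈ Finset.range l, X ^ c) (X ^ l)).map (aeval (R := ℂ) (cpx Φ))
  refine controllable_of_forall_left_eigenvector _ _ fun η hη ⟨μ, hμ⟩ hηΨ =>
    h2 (η ᵥ* S) ?_ ⟨μ, ?_⟩ ?_
  · simpa using (Matrix.vecMul_injective_of_isUnit hSunit).ne hη
  · rw [Matrix.vecMul_vecMul, hSΦ.eq, ← Matrix.vecMul_vecMul, ← cpx_pow, hμ, Matrix.smul_vecMul]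
  · rwa [Matrix.vecMul_vecMul, ← hS]

theorem stmt18
    (n m p N : ℕ) (hn : 0 < n) (hm : 0 < m) (hp : 0 < p) (hN : 0 < N)
    (h : ℝ) (hh : 0 < h)
    (A : Matrix (Fin n) (Fin n) ℝ) (B : Matrix (Fin n) (Fin p) ℝ)
    (C : Matrix (Fin m) (Fin n) ℝ) (H : Matrix (Fin n) (Fin m) ℝ)
    (W : Matrix (Fin N) (Fin N) ℝ)
    (δ : Fin N → ℝ) (hδ : ∀ i, δ i = 0 ∨ δ i = 1)
    (l : ℕ) (hl : 1 ≤ l)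
    (h1 : ∀ θ : ℂ, IsEig (cpx (Phis A H C W h)) θ → ∑ c ∈ Finset.range l, θ ^ c ≠ 0)
    (h2 : ∀ η : Fin N × Fin n → ℂ, η ≠ 0 →
      (∃ μ : ℂ, η ᵥ* (cpx (Phis A H C W h) ^ l) = μ • η) →
      η ᵥ* cpx (Matrix.diagonal δ ⊗ₖ sampB A B h) ≠ 0) :
    Controllable (Phis A H C W h ^ l)
      ((∑ c ∈ Finset.range l, Phis A H C W h ^ c) *
        (Matrix.diagonal δ ⊗ₖ sampB A B h)) :=
  stmt18_general n m p N h A B C H W δ l h1 h2
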